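/- arXiv:1008.5205 — 3 statements merged into one kernel-verified Lean document; each statement's English description precedes it below -/
import Mathlib

section
/- Let a ∈ B be invertible in a unital ring B and suppose ω : S → S satisfies t·ω(b) = b + (t-1)·F(ω(b)) for a fixed scalar t, where F(w) = w - a w⁻¹ a and F(w) a⁻¹ w = w a⁻¹ F(w) for all w ∈ S (with all elements of S invertible). Then b a⁻¹ ω(b) = ω(b) a⁻¹ b for all b. -/
theorem smul_sub_smul_mul_mul_comm {R B : Type*} [Ring B] [SMul R B] [IsScalarTower R B B]
    [SMulCommClass R B B] {m c d : B} (hd : d * m * c = c * m * d) (s r : R) :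
    (s • c - r • d) * m * c = c * m * (s • c - r • d) := by
  simp only [sub_mul, mul_sub, smul_mul_assoc, mul_smul_comm, hd]

theorem omega_commutation_general {B : Type*} [Ring B] [Algebra ℂ B] (a : B) [Invertible a]
    (S : Set B) (t : ℂ) (F : B → B)
    (hcomm : ∀ w ∈ S, F w * ⅟a * w = w * ⅟a * F w)
    (ω : B → B) (hωS : ∀ b ∈ S, ω b ∈ S)
    (hω : ∀ b ∈ S, t • ω b = b + (t - 1) • F (ω b)) :
    ∀ b ∈ S, b * ⅟a * ω b = ω b * ⅟a * b := by
  intro b hb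
  have hb_eq : b = t • ω b - (t - 1) • F (ω b) := eq_sub_of_add_eq (hω b hb).symm
  simpa only [← hb_eq] using smul_sub_smul_mul_mul_comm (hcomm (ω b) (hωS b hb)) t (t - 1)

/-- If `ω : S → S` satisfies `t·ω(b) = b + (t-1)·F(ω(b))` for a fixed scalar `t`, where
`F(w) = w - a w⁻¹ a` on a set `S` of invertible elements and `F(w) a⁻¹ w = w a⁻¹ F(w)` for
all `w ∈ S`, then `b a⁻¹ ω(b) = ω(b) a⁻¹ b` for all `b ∈ S`. -/
theorem omega_commutation {B : Type*} [Ring B] [Algebra ℂ B] (a : B) [Invertible a]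
    (S : Set B) (inv : B → B) (hinv : ∀ w ∈ S, w * inv w = 1 ∧ inv w * w = 1)
    (t : ℂ) (F : B → B) (hFdef : ∀ w ∈ S, F w = w - a * inv w * a)
    (hcomm : ∀ w ∈ S, F w * ⅟a * w = w * ⅟a * F w)
    (ω : B → B) (hωS : ∀ b ∈ S, ω b ∈ S)
    (hω : ∀ b ∈ S, t • ω b = b + (t - 1) • F (ω b)) :
    ∀ b ∈ S, b * ⅟a * ω b = ω b * ⅟a * b :=
  omega_commutation_general a S t F hcomm ω hωS hω
end

section
/- If X and Y are Boolean independent self-adjoint random variables over B with B-transforms B_X and B_Y (defined by M(b) - 1 = B(b)·M(b) where M is the moment generating series), then B_{X+Y} = B_X + B_Y as formal power series in b. -/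
open scoped BigOperators Pointwise

/-- `B⟨X⟩₀`: the non-unital subalgebra of polynomials in `X` with coefficients in the
subalgebra `B` and no free term. -/
noncomputable def polysNoConst {A : Type*} [Ring A] [Algebra ℂ A]
    (B : Subalgebra ℂ A) (X : A) : NonUnitalSubalgebra ℂ A :=
  NonUnitalAlgebra.adjoin ℂ ((B : Set A) * ({X} : Set A) * (B : Set A))

/-- `X` and `Y` are Boolean independent over `B` with respect to the conditional
expectation `E`: for every alternating word of elements of `B⟨X⟩₀` and `B⟨Y⟩₀`,
`E` of the product is the product of the `E`'s. -/
def BooleanIndep {A : Type*} [Ring A] [Algebra ℂ A]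
    (B : Subalgebra ℂ A) (E : A →ₗ[ℂ] A) (X Y : A) : Prop :=
  ∀ l : List (A × Bool),
    (∀ p ∈ l, p.1 ∈ (if p.2 then polysNoConst B X else polysNoConst B Y)) →
    List.Chain' (· ≠ ·) (l.map Prod.snd) →
    E (l.map Prod.fst).prod = (l.map fun p => E p.1).prod


/-!
Put `s = Xb`, `t = Yb`, let `M_s`, `M_t`, `M` be the moment series of `s`, `t`, `s + t`, and let
`W_s`, `W_t` be the generating series of the moments `E(s(s+t)ⁿ)`, `E(t(s+t)ⁿ)` of the words
starting with `s`, resp. `t`, so that `M = 1 + W_s + W_t`. Cutting a word after its first block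
`sʲ` and factoring `E` by Boolean independence gives `W_s = (M_s - 1)(1 + W_t)`. Since
`(1 - B_s) M_s = 1`, this forces `W_s = B_s M`, and symmetrically `W_t = B_t M`. Hence
`M - 1 = (B_s + B_t) M = B_{s+t} M`, and `M` is invertible because its constant term is `1`.
-/

open PowerSeries
open Finset.HasAntidiagonal (antidiagonal)

section Semiring

variable {R : Type*} [Semiring R]

theorem add_pow_succ_eq_pow_add_sum_antidiagonal (s t : R) (n : ℕ) :
    (s + t) ^ (n + 1) = s ^ (n + 1) + ∑ p ∈ antidiagonal n, s ^ p.1 * t * (s + t) ^ p.2 := by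
  induction n with
  | zero => simp
  | succ n ih =>
    rw [pow_succ, ih, Finset.Nat.sum_antidiagonal_succ', add_mul, Finset.sum_mul, mul_add,
      ← add_assoc, pow_succ s (n + 1)]
    simp only [pow_zero, mul_one, pow_succ (s + t), mul_assoc]

noncomputable def momentSeries (E : R → R) (a : R) : R⟦X⟧ :=
  mk fun n => E (a ^ n)

theorem constantCoeff_momentSeries {E : R → R} (hE : E 1 = 1) (a : R) :
    constantCoeff (momentSeries E a) = 1 := by
  rw [momentSeries, ← coeff_zero_eq_constantCoeff_apply, coeff_mk, pow_zero, hE]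

end Semiring

section Ring

variable {R : Type*} [Ring R]

theorem eq_mul_of_sub_one_eq_mul_of_eq_sub_one_mul {p v w m η : R} (hp : p - 1 = η * p)
    (hw : w = (p - 1) * (1 + v)) (hm : m = 1 + w + v) : w = η * m := by
  have h : w - η * m = (p - 1 - η * p) * (1 + v) := by
    rw [hm, hw]
    noncomm_ring
  rwa [sub_eq_zero.mpr hp, zero_mul, sub_eq_zero] at h

theorem PowerSeries.mk_sub_one_eq_mul_of_recurrence {μ β : ℕ → R} (h₀ : μ 0 = 1)
    (h : ∀ m, 1 ≤ m → μ m = ∑ k ∈ Finset.Icc 1 m, β k * μ (m - k)) :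
    mk μ - 1 = mk (fun k => if k = 0 then 0 else β k) * mk μ := by
  ext (_ | m)
  · simp [h₀]
  · rw [map_sub, coeff_mk, coeff_one, if_neg m.succ_ne_zero, sub_zero, h _ m.succ_pos, coeff_mul,
      Finset.Nat.sum_antidiagonal_eq_sum_range_succ_mk, Finset.sum_range_succ',
      ← Finset.Ico_add_one_right_eq_Icc, Finset.sum_Ico_eq_sum_range]
    simp [add_comm 1]

theorem momentSeries_sub_one_eq_mul_of_recurrence {E : R → R} {a : R} {β : ℕ → R}
    (hE : E 1 = 1)
    (h : ∀ m, 1 ≤ m → E (a ^ m) = ∑ k ∈ Finset.Icc 1 m, β k * E (a ^ (m - k))) :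
    momentSeries E a - 1 = mk (fun k => if k = 0 then 0 else β k) * momentSeries E a :=
  mk_sub_one_eq_mul_of_recurrence (by simpa using hE) h

theorem PowerSeries.eq_of_mul_right_eq {f g φ : R⟦X⟧} (hφ : constantCoeff φ = 1)
    (h : f * φ = g * φ) : f = g :=
  (isUnit_iff_constantCoeff.mpr (hφ ▸ isUnit_one)).mul_left_inj.mp h

end Ring

section Boolean

variable {A : Type*} [Ring A] [Algebra ℂ A]

noncomputable def coloredPolys (B : Subalgebra ℂ A) (X Y : A) (c : Bool) :
    NonUnitalSubalgebra ℂ A :=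
  if c then polysNoConst B X else polysNoConst B Y

def IsAlternatingWord (B : Subalgebra ℂ A) (X Y : A) (l : List (A × Bool)) : Prop :=
  (∀ p ∈ l, p.1 ∈ coloredPolys B X Y p.2) ∧ (l.map Prod.snd).IsChain (· ≠ ·)

variable {B : Subalgebra ℂ A} {X Y : A}

theorem mul_mem_polysNoConst {b : A} (hb : b ∈ B) : X * b ∈ polysNoConst B X :=
  NonUnitalAlgebra.subset_adjoin ℂ
    ⟨1 * X, Set.mul_mem_mul B.one_mem rfl, b, hb, by rw [one_mul]⟩

theorem pow_succ_mem_coloredPolys {c : Bool} {s : A} (hs : s ∈ coloredPolys B X Y c) (i : ℕ) :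
    s ^ (i + 1) ∈ coloredPolys B X Y c := by
  induction i with
  | zero => simpa
  | succ i ih => simpa only [pow_succ _ (i + 1)] using mul_mem ih hs

namespace IsAlternatingWord

variable {l : List (A × Bool)} {a a' : A} {c : Bool}

theorem singleton (ha : a ∈ coloredPolys B X Y c) : IsAlternatingWord B X Y [(a, c)] :=
  ⟨by simpa using ha, List.isChain_singleton _⟩

theorem mul_last (hl : IsAlternatingWord B X Y (l ++ [(a, c)]))
    (ha' : a' ∈ coloredPolys B X Y c) : IsAlternatingWord B X Y (l ++ [(a * a', c)]) := by
  refine ⟨?_, by simpa using hl.2⟩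
  simp only [List.mem_append, List.mem_singleton]
  rintro p (hp | rfl)
  · exact hl.1 p (by simp [hp])
  · exact mul_mem (hl.1 (a, c) (by simp)) ha'

theorem append_not (hl : IsAlternatingWord B X Y (l ++ [(a, c)]))
    (ha' : a' ∈ coloredPolys B X Y (!c)) :
    IsAlternatingWord B X Y (l ++ [(a, c)] ++ [(a', !c)]) := by
  refine ⟨?_, ?_⟩
  · simp only [List.mem_append, List.mem_singleton]
    rintro p ((hp | rfl) | rfl)
    · exact hl.1 p (by simp [hp])
    · exact hl.1 (a, c) (by simp)
    · exact ha'
  · rw [List.map_append]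
    refine hl.2.append (List.isChain_singleton _) ?_
    simp

end IsAlternatingWord

namespace BooleanIndep

variable {E : A →ₗ[ℂ] A} {s t : A} {c : Bool}

theorem map_prod (h : BooleanIndep B E X Y) {l : List (A × Bool)}
    (hl : IsAlternatingWord B X Y l) : E (l.map Prod.fst).prod = (l.map fun p => E p.1).prod :=
  h l hl.1 hl.2

/- Induction on `n`: the next factor of `s + t` splits into a letter of the colour of `a`, which
`a` absorbs, and one of the other colour, which starts a new block of the word. -/
theorem map_prod_mul_mul_add_pow (h : BooleanIndep B E X Y) (hs : s ∈ coloredPolys B X Y c)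
    (ht : t ∈ coloredPolys B X Y (!c)) (n : ℕ) {l : List (A × Bool)} {a : A} {d : Bool}
    (hl : IsAlternatingWord B X Y (l ++ [(a, d)])) :
    E ((l.map Prod.fst).prod * (a * (s + t) ^ n)) =
      (l.map fun p => E p.1).prod * E (a * (s + t) ^ n) := by
  induction n generalizing l a d with
  | zero => simpa using h.map_prod hl
  | succ n ih =>
    obtain ⟨u, v, hu, hv, huv⟩ : ∃ u v, u ∈ coloredPolys B X Y d ∧
        v ∈ coloredPolys B X Y (!d) ∧ s + t = u + v := by
      cases c <;> cases d <;>
        first | exact ⟨s, t, hs, ht, rfl⟩ | exact ⟨t, s, ht, hs, add_comm s t⟩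
    have hsplit : a * (s + t) ^ (n + 1) = a * u * (s + t) ^ n + a * (v * (s + t) ^ n) := by
      rw [pow_succ', ← mul_assoc, huv, mul_add, add_mul, mul_assoc a v, ← huv]
    have hfirst : E (a * (v * (s + t) ^ n)) = E a * E (v * (s + t) ^ n) := by
      simpa using ih (l := [(a, d)])
        (IsAlternatingWord.append_not (l := []) (.singleton (hl.1 (a, d) (by simp))) hv)
    rw [hsplit, mul_add, map_add, map_add, mul_add, ih (hl.mul_last hu), hfirst, ← mul_assoc,
      ← mul_assoc (l.map _).prod]
    simpa [mul_assoc] using ih (hl.append_not hv)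

theorem map_mul_mul_add_pow (h : BooleanIndep B E X Y) (hs : s ∈ coloredPolys B X Y c)
    (ht : t ∈ coloredPolys B X Y (!c)) (n : ℕ) {u v : A} {d : Bool}
    (hu : u ∈ coloredPolys B X Y d) (hv : v ∈ coloredPolys B X Y (!d)) :
    E (u * (v * (s + t) ^ n)) = E u * E (v * (s + t) ^ n) := by
  simpa using h.map_prod_mul_mul_add_pow hs ht n (l := [(u, d)])
    (IsAlternatingWord.append_not (l := []) (.singleton hu) hv)

theorem map_mul_add_pow_succ (h : BooleanIndep B E X Y) (hs : s ∈ coloredPolys B X Y c)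
    (ht : t ∈ coloredPolys B X Y (!c)) (n : ℕ) :
    E (s * (s + t) ^ (n + 1)) =
      E (s ^ (n + 2)) + ∑ p ∈ antidiagonal n, E (s ^ (p.1 + 1)) * E (t * (s + t) ^ p.2) := by
  rw [add_pow_succ_eq_pow_add_sum_antidiagonal, mul_add, ← pow_succ', Finset.mul_sum, map_add,
    map_sum]
  congr 1
  refine Finset.sum_congr rfl fun p _ => ?_
  rw [← mul_assoc, ← mul_assoc, ← pow_succ', mul_assoc]
  exact h.map_mul_mul_add_pow hs ht p.2 (pow_succ_mem_coloredPolys hs p.1) ht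

theorem X_mul_mk_map_mul_add_pow (h : BooleanIndep B E X Y) (hE : E 1 = 1)
    (hs : s ∈ coloredPolys B X Y c) (ht : t ∈ coloredPolys B X Y (!c)) :
    PowerSeries.X * mk (fun n => E (s * (s + t) ^ n)) =
      (momentSeries E s - 1) * (1 + PowerSeries.X * mk fun n => E (t * (s + t) ^ n)) := by
  have hshift : momentSeries E s - 1 = PowerSeries.X * mk fun n => E (s ^ (n + 1)) := by
    ext (_ | n) <;> simp [momentSeries, hE, coeff_succ_X_mul]
  have hwords : mk (fun n => E (s * (s + t) ^ n)) = (mk fun n => E (s ^ (n + 1))) +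
      PowerSeries.X * ((mk fun n => E (s ^ (n + 1))) * mk fun n => E (t * (s + t) ^ n)) := by
    ext (_ | n)
    · simp
    · rw [coeff_mk, map_add, coeff_mk, coeff_succ_X_mul, coeff_mul, h.map_mul_add_pow_succ hs ht]
      simp
  rw [hshift, hwords, mul_assoc, mul_add (mk _), mul_one, ← mul_assoc (mk _) PowerSeries.X,
    (commute_X _).eq, mul_assoc PowerSeries.X (mk _)]

theorem bTransform_add (h : BooleanIndep B E X Y) (hE : E 1 = 1) (hs : s ∈ polysNoConst B X)
    (ht : t ∈ polysNoConst B Y) {ηs ηt η : A⟦X⟧}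
    (hηs : momentSeries E s - 1 = ηs * momentSeries E s)
    (hηt : momentSeries E t - 1 = ηt * momentSeries E t)
    (hη : momentSeries E (s + t) - 1 = η * momentSeries E (s + t)) :
    η = ηs + ηt := by
  set M := momentSeries E (s + t)
  set Ws := PowerSeries.X * mk fun n => E (s * (s + t) ^ n)
  set Wt := PowerSeries.X * mk fun n => E (t * (s + t) ^ n)
  have hM : M = 1 + Ws + Wt := by
    ext (_ | n) <;> simp [M, Ws, Wt, momentSeries, hE, coeff_succ_X_mul, pow_succ', add_mul]
  have hWs : Ws = ηs * M := eq_mul_of_sub_one_eq_mul_of_eq_sub_one_mul hηs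
    (h.X_mul_mk_map_mul_add_pow hE (c := true) hs ht) hM
  have hWt : Wt = ηt * M := by
    refine eq_mul_of_sub_one_eq_mul_of_eq_sub_one_mul hηt ?_ (hM.trans (add_right_comm _ _ _))
    simpa only [add_comm t s] using h.X_mul_mk_map_mul_add_pow hE (c := false) ht hs
  refine eq_of_mul_right_eq (constantCoeff_momentSeries hE (s + t)) ?_
  rw [← hη, add_mul, ← hWs, ← hWt, hM]
  abel

end BooleanIndep

end Boolean

theorem boolean_B_transform_additive_general {A : Type*} [Ring A] [Algebra ℂ A]
    (B : Subalgebra ℂ A) (E : A →ₗ[ℂ] A)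
    (hid : ∀ b ∈ B, E b = b)
    (X Y : A)
    (hindep : BooleanIndep B E X Y)
    (b : A) (hb : b ∈ B)
    (BX BY BXY : ℕ → A)
    (hBX : ∀ m, 1 ≤ m →
      E ((X * b) ^ m) = ∑ k ∈ Finset.Icc 1 m, BX k * E ((X * b) ^ (m - k)))
    (hBY : ∀ m, 1 ≤ m →
      E ((Y * b) ^ m) = ∑ k ∈ Finset.Icc 1 m, BY k * E ((Y * b) ^ (m - k)))
    (hBXY : ∀ m, 1 ≤ m →
      E (((X + Y) * b) ^ m) = ∑ k ∈ Finset.Icc 1 m, BXY k * E (((X + Y) * b) ^ (m - k))) :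
    ∀ m, 1 ≤ m → BXY m = BX m + BY m := by
  intro m hm
  have hE : E 1 = 1 := hid 1 B.one_mem
  have htransform := hindep.bTransform_add hE (mul_mem_polysNoConst hb) (mul_mem_polysNoConst hb)
    (momentSeries_sub_one_eq_mul_of_recurrence hE hBX)
    (momentSeries_sub_one_eq_mul_of_recurrence hE hBY)
    (momentSeries_sub_one_eq_mul_of_recurrence hE (by simpa only [add_mul] using hBXY))
  simpa [Nat.one_le_iff_ne_zero.mp hm] using congrArg (coeff m) htransform

/-- Additivity of the Boolean `B`-transform: if `X, Y` are Boolean independent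
self-adjoint random variables over `B`, and for `b ∈ B` the homogeneous components
`BX, BY, BXY` of the `B`-transforms of `X`, `Y`, `X + Y` are defined by the recurrence
`E((Xb)^m) = ∑_{k=1}^m B_{X,k}(b) E((Xb)^{m-k})` (from `M(b) - 1 = B(b)·M(b)`),
then `B_{X+Y} = B_X + B_Y` in each degree. -/
theorem boolean_B_transform_additive {A : Type*} [Ring A] [Algebra ℂ A] [StarRing A]
    (B : Subalgebra ℂ A) (E : A →ₗ[ℂ] A)
    (hrange : ∀ x, E x ∈ B) (hid : ∀ b ∈ B, E b = b)
    (hbimod : ∀ b₁ ∈ B, ∀ b₂ ∈ B, ∀ x, E (b₁ * x * b₂) = b₁ * E x * b₂)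
    (X Y : A) (hXsa : IsSelfAdjoint X) (hYsa : IsSelfAdjoint Y)
    (hindep : BooleanIndep B E X Y)
    (b : A) (hb : b ∈ B)
    (BX BY BXY : ℕ → A)
    (hBX : ∀ m, 1 ≤ m →
      E ((X * b) ^ m) = ∑ k ∈ Finset.Icc 1 m, BX k * E ((X * b) ^ (m - k)))
    (hBY : ∀ m, 1 ≤ m →
      E ((Y * b) ^ m) = ∑ k ∈ Finset.Icc 1 m, BY k * E ((Y * b) ^ (m - k)))
    (hBXY : ∀ m, 1 ≤ m →
      E (((X + Y) * b) ^ m) = ∑ k ∈ Finset.Icc 1 m, BXY k * E (((X + Y) * b) ^ (m - k))) :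
    ∀ m, 1 ≤ m → BXY m = BX m + BY m :=
  boolean_B_transform_additive_general B E hid X Y hindep b hb BX BY BXY hBX hBY hBXY
end

section
/- If η : B → B is a linear map on a unital algebra B satisfying η(b)·b·η(b) = η(b·η(b)·b) for all b and η is of the general completely positive form η(b) = (1/m)∑ⱼ aⱼ b aⱼ with the aⱼ self-adjoint in a factor (or Mₙ(ℂ)), then m = 1, i.e. η(b) = a b a for a single self-adjoint a (up to the stated normalization). -/
/-!
Testing the identity on `b = v v*` turns it into `(G v)(G v)* = (v* G v) G` with
`G = ∑ⱼ (aⱼ v)(aⱼ v)*`. On the diagonal this is the equality case of Cauchy–Schwarz, which by the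
Binet–Cauchy identity gives `⟨v, aⱼ v⟩ aₖ v = ⟨v, aₖ v⟩ aⱼ v` for every `v`. Fix `a₀ = aⱼ₀ ≠ 0` and
`v₀` with `⟨v₀, a₀ v₀⟩ ≠ 0`: the self-adjoint matrix `D = ⟨v₀, a₀ v₀⟩ aⱼ - ⟨v₀, aⱼ v₀⟩ a₀` satisfies
the same relation with `a₀` and kills `v₀`, and expanding the relation along the line `v₀ + t w`
forces `D w = 0`. So every `aⱼ` is a real multiple `sⱼ a₀`, and `c = (m⁻¹ ∑ⱼ sⱼ²)^(1/2) a₀` works.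
-/

open Matrix RCLike

section Sandwich

variable {κ R : Type*} [Fintype κ]

def sandwichSum [NonUnitalNonAssocSemiring R] (a : κ → R) (b : R) : R := ∑ j, a j * b * a j

theorem IsSelfAdjoint.sandwichSum [NonUnitalSemiring R] [StarRing R] {a : κ → R}
    (ha : ∀ j, IsSelfAdjoint (a j)) {b : R} (hb : IsSelfAdjoint b) :
    IsSelfAdjoint (sandwichSum a b) :=
  isSelfAdjoint_sum _ fun j _ => by simpa only [(ha j).star_eq] using hb.conjugate (a j)

theorem sandwichSum_smul {K : Type*} [Monoid K] [NonUnitalNonAssocSemiring R]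
    [DistribMulAction K R] [IsScalarTower K R R] [SMulCommClass K R R] (a : κ → R) (t : K) (b : R) :
    sandwichSum a (t • b) = t • sandwichSum a b := by
  simp only [sandwichSum, Finset.smul_sum, mul_smul_comm, smul_mul_assoc]

theorem sandwichSum_identity_of_smul {K : Type*} [Field K] [Ring R] [Module K R]
    [IsScalarTower K R R] [SMulCommClass K R R] {a : κ → R} {t : K} (ht : t ≠ 0)
    (h : ∀ b, (t • sandwichSum a b) * b * (t • sandwichSum a b) =
      t • sandwichSum a (b * (t • sandwichSum a b) * b)) (b : R) :
    sandwichSum a b * b * sandwichSum a b = sandwichSum a (b * sandwichSum a b * b) := by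
  have hb := h b
  simp only [smul_mul_assoc, mul_smul_comm, sandwichSum_smul, smul_smul] at hb
  exact smul_right_injective R (mul_ne_zero ht ht) hb

end Sandwich

theorem Finset.sum_sum_mul_sub_mul_mul_sub {κ R : Type*} [CommRing R] (s : Finset κ)
    (a b c d : κ → R) :
    ∑ i ∈ s, ∑ j ∈ s, (a i * b j - a j * b i) * (c i * d j - c j * d i) =
      2 * ((∑ i ∈ s, a i * c i) * (∑ j ∈ s, b j * d j) -
        (∑ i ∈ s, a i * d i) * (∑ j ∈ s, b j * c j)) := by
  have expand : ∀ i j, (a i * b j - a j * b i) * (c i * d j - c j * d i) =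
      a i * c i * (b j * d j) - a i * d i * (b j * c j) - b i * c i * (a j * d j) +
        b i * d i * (a j * c j) := fun i j => by ring
  simp only [expand, sum_add_distrib, sum_sub_distrib, ← sum_mul_sum]
  ring

section RankOne

variable {ι κ α : Type*} [Fintype ι] [Fintype κ] [CommRing α] [StarRing α]

theorem mul_vecMulVec_star_mul_self {A : Matrix ι ι α} (hA : IsSelfAdjoint A) (v : ι → α) :
    A * vecMulVec v (star v) * A = vecMulVec (A *ᵥ v) (star (A *ᵥ v)) := by
  rw [mul_vecMulVec, vecMulVec_mul, star_mulVec, ← star_eq_conjTranspose, hA.star_eq]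

theorem vecMulVec_star_mul_mul_vecMulVec_star (A : Matrix ι ι α) (v : ι → α) :
    vecMulVec v (star v) * A * vecMulVec v (star v) =
      (star v ⬝ᵥ A *ᵥ v) • vecMulVec v (star v) := by
  rw [vecMulVec_mul, vecMulVec_mul_vecMulVec, ← dotProduct_mulVec]
  ext
  simp [vecMulVec_apply, mul_left_comm]

theorem sum_vecMulVec_star_mulVec (w : κ → ι → α) (v : ι → α) :
    (∑ j, vecMulVec (w j) (star (w j))) *ᵥ v = ∑ j, (star (w j) ⬝ᵥ v) • w j := by
  simp [sum_mulVec, vecMulVec_mulVec]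

end RankOne

variable {𝕜 ι κ : Type*} [RCLike 𝕜] [Fintype ι] [Fintype κ]

open scoped ComplexOrder in
theorem star_mul_eq_star_mul_of_sum_mul_eq {x y : κ → 𝕜}
    (h : (∑ j, x j * y j) * star (∑ j, x j * y j) =
      (∑ j, x j * star (x j)) * ∑ j, y j * star (y j)) (i j : κ) :
    star (x i) * y j = star (x j) * y i := by
  set e : κ → κ → 𝕜 := fun i j => star (x i) * y j - star (x j) * y i
  have hsum : ∑ i, ∑ j, e i j * star (e i j) = 0 := by
    have h₁ : ∑ i, star (x i) * x i = ∑ i, x i * star (x i) :=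
      Finset.sum_congr rfl fun i _ => mul_comm _ _
    have h₂ : ∑ i, star (x i) * star (y i) = star (∑ i, x i * y i) := by
      simp only [star_sum, star_mul']
    have h₃ : ∑ i, y i * x i = ∑ i, x i * y i := Finset.sum_congr rfl fun i _ => mul_comm _ _
    simp only [e, star_sub, star_mul', star_star]
    rw [Finset.sum_sum_mul_sub_mul_mul_sub, h₁, h₂, h₃, ← h]
    ring
  have hnonneg : ∀ i j, 0 ≤ e i j * star (e i j) := fun i j => mul_star_self_nonneg _
  have hi := (Finset.sum_eq_zero_iff_of_nonneg fun i _ => Finset.sum_nonneg fun j _ =>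
    hnonneg i j).1 hsum i (Finset.mem_univ _)
  have hij := (Finset.sum_eq_zero_iff_of_nonneg fun j _ => hnonneg i j).1 hi j (Finset.mem_univ _)
  exact sub_eq_zero.1 ((mul_eq_zero.1 hij).elim id star_eq_zero.1)

theorem star_dotProduct_smul_comm_of_vecMulVec_eq (w : κ → ι → 𝕜) (v : ι → 𝕜)
    {G : Matrix ι ι 𝕜} (hG : G = ∑ j, vecMulVec (w j) (star (w j)))
    (h : vecMulVec (G *ᵥ v) (star (G *ᵥ v)) = (star v ⬝ᵥ G *ᵥ v) • G) (i j : κ) :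
    (star v ⬝ᵥ w i) • w j = (star v ⬝ᵥ w j) • w i := by
  have hx : ∀ k, star v ⬝ᵥ w k = star (star (w k) ⬝ᵥ v) := fun k => star_dotProduct v (w k)
  funext p
  have hp := congr_fun₂ h p p
  rw [hG, sum_vecMulVec_star_mulVec] at hp
  simp only [vecMulVec_apply, Matrix.smul_apply, smul_eq_mul, Finset.sum_apply, Matrix.sum_apply,
    Pi.smul_apply, Pi.star_apply, dotProduct_sum, dotProduct_smul, hx] at hp
  simpa only [Pi.smul_apply, smul_eq_mul, hx] using star_mul_eq_star_mul_of_sum_mul_eq hp i j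

theorem smul_mulVec_comm_of_sandwichSum_identity {a : κ → Matrix ι ι 𝕜}
    (ha : ∀ j, IsSelfAdjoint (a j))
    (h : ∀ b, sandwichSum a b * b * sandwichSum a b = sandwichSum a (b * sandwichSum a b * b))
    (v : ι → 𝕜) (j k : κ) :
    (star v ⬝ᵥ a j *ᵥ v) • a k *ᵥ v = (star v ⬝ᵥ a k *ᵥ v) • a j *ᵥ v := by
  set b := vecMulVec v (star v)
  have hG : sandwichSum a b = ∑ j, vecMulVec (a j *ᵥ v) (star (a j *ᵥ v)) :=
    Finset.sum_congr rfl fun j _ => mul_vecMulVec_star_mul_self (ha j) v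
  have hb : IsSelfAdjoint b := by
    simp [b, IsSelfAdjoint, star_eq_conjTranspose, conjTranspose_vecMulVec]
  have hid := h b
  rw [mul_vecMulVec_star_mul_self (hb.sandwichSum ha), vecMulVec_star_mul_mul_vecMulVec_star,
    sandwichSum_smul] at hid
  exact star_dotProduct_smul_comm_of_vecMulVec_eq (fun j => a j *ᵥ v) v hG hid j k

theorem Matrix.IsHermitian.exists_star_dotProduct_mulVec_ne_zero [DecidableEq ι]
    {A : Matrix ι ι 𝕜} (hA : A.IsHermitian) (h : A ≠ 0) : ∃ v, star v ⬝ᵥ A *ᵥ v ≠ 0 := by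
  obtain ⟨i, hi⟩ := Function.ne_iff.1 (mt hA.eigenvalues_eq_zero_iff.1 h)
  refine ⟨hA.eigenvectorBasis i, fun h0 => hi ?_⟩
  rw [hA.eigenvalues_eq, h0, map_zero, Pi.zero_apply]

theorem Matrix.IsHermitian.isSelfAdjoint_star_dotProduct_mulVec {A : Matrix ι ι 𝕜}
    (hA : A.IsHermitian) (v : ι → 𝕜) : IsSelfAdjoint (star v ⬝ᵥ A *ᵥ v) :=
  conj_eq_iff_im.2 (hA.im_star_dotProduct_mulVec_self v)

theorem eq_zero_of_smul_mulVec_comm [DecidableEq ι] {A D : Matrix ι ι 𝕜} (hD : IsSelfAdjoint D)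
    (hAD : ∀ v, (star v ⬝ᵥ A *ᵥ v) • D *ᵥ v = (star v ⬝ᵥ D *ᵥ v) • A *ᵥ v)
    {v₀ : ι → 𝕜} (hDv₀ : D *ᵥ v₀ = 0) (hAv₀ : star v₀ ⬝ᵥ A *ᵥ v₀ ≠ 0) : D = 0 := by
  refine ext_of_mulVec_single fun i => ?_
  set w : ι → 𝕜 := Pi.single i 1
  have hv₀D : star v₀ ⬝ᵥ D *ᵥ w = 0 := by
    rw [dotProduct_mulVec, ← hD.star_eq, star_eq_conjTranspose, ← star_mulVec, hDv₀, star_zero,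
      zero_dotProduct]
  set α := star v₀ ⬝ᵥ A *ᵥ v₀
  set β := star v₀ ⬝ᵥ A *ᵥ w + star w ⬝ᵥ A *ᵥ v₀
  set γ := star w ⬝ᵥ A *ᵥ w
  set δ := star w ⬝ᵥ D *ᵥ w
  have hline : ∀ t : 𝕜, star t = t →
      (t * α + t ^ 2 * β + t ^ 3 * γ) • D *ᵥ w = (t ^ 2 * δ) • A *ᵥ v₀ + (t ^ 3 * δ) • A *ᵥ w := by
    intro t ht
    have h := hAD (v₀ + t • w)
    simp only [mulVec_add, mulVec_smul, hDv₀, zero_add, star_add, star_smul, ht, add_dotProduct,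
      smul_dotProduct, dotProduct_add, dotProduct_smul, hv₀D, smul_eq_mul] at h
    linear_combination (norm := module) h
  -- the coefficient `α • D *ᵥ w` of `t` is isolated by evaluating at `t = 1, -1, 2`
  have key : α • D *ᵥ w = 0 := by
    linear_combination (norm := module) hline 1 (by simp) - (1 / 3 : 𝕜) • hline (-1) (by simp) -
      (1 / 6 : 𝕜) • hline 2 (by simp)
  rw [zero_mulVec]
  exact (smul_eq_zero.1 key).resolve_left hAv₀

theorem exists_eq_smul_of_smul_mulVec_comm [DecidableEq ι] {a : κ → Matrix ι ι 𝕜}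
    (ha : ∀ j, IsSelfAdjoint (a j))
    (hrel : ∀ v j k, (star v ⬝ᵥ a j *ᵥ v) • a k *ᵥ v = (star v ⬝ᵥ a k *ᵥ v) • a j *ᵥ v) :
    ∃ a₀ : Matrix ι ι 𝕜, IsSelfAdjoint a₀ ∧ ∃ s : κ → ℝ, a = fun j => (s j : 𝕜) • a₀ := by
  by_cases h0 : a = 0
  · exact ⟨0, .zero _, 0, funext fun j => by simp [h0]⟩
  obtain ⟨j₀, hj₀⟩ := Function.ne_iff.1 h0
  obtain ⟨v₀, hv₀⟩ := Matrix.IsHermitian.exists_star_dotProduct_mulVec_ne_zero (ha j₀) hj₀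
  set q : κ → 𝕜 := fun j => star v₀ ⬝ᵥ a j *ᵥ v₀
  have hq : ∀ j, IsSelfAdjoint (q j) :=
    fun j => Matrix.IsHermitian.isSelfAdjoint_star_dotProduct_mulVec (ha j) v₀
  refine ⟨a j₀, ha j₀, fun j => re (q j) / re (q j₀), funext fun j => ?_⟩
  have hD : q j₀ • a j - q j • a j₀ = 0 := by
    refine eq_zero_of_smul_mulVec_comm (((hq j₀).smul (ha j)).sub ((hq j).smul (ha j₀)))
      (fun v => ?_) ?_ hv₀
    · simp only [sub_mulVec, smul_mulVec, dotProduct_sub, dotProduct_smul, smul_eq_mul]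
      linear_combination (norm := module) q j₀ • hrel v j₀ j
    · rw [sub_mulVec, smul_mulVec, smul_mulVec, hrel v₀ j₀ j, sub_self]
  have hre : ∀ j, (re (q j) : 𝕜) = q j := fun j => conj_eq_iff_re.1 (hq j)
  push_cast [hre]
  rw [div_eq_inv_mul, mul_smul, ← sub_eq_zero.1 hD, inv_smul_smul₀ hv₀]

theorem exists_isSelfAdjoint_smul_sandwichSum_eq {R : Type*} [Ring R] [StarRing R] [Module 𝕜 R]
    [StarModule 𝕜 R] [IsScalarTower 𝕜 R R] [SMulCommClass 𝕜 R R] {a₀ : R}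
    (ha₀ : IsSelfAdjoint a₀) {r : ℝ} (hr : 0 ≤ r) (s : κ → ℝ) :
    ∃ c : R, IsSelfAdjoint c ∧
      ∀ b, (r : 𝕜) • sandwichSum (fun j => (s j : 𝕜) • a₀) b = c * b * c := by
  have hx : 0 ≤ r * ∑ j, s j ^ 2 := mul_nonneg hr (Finset.sum_nonneg fun j _ => sq_nonneg _)
  refine ⟨(√(r * ∑ j, s j ^ 2) : 𝕜) • a₀, IsSelfAdjoint.smul (conj_ofReal _) ha₀, fun b => ?_⟩
  simp only [sandwichSum, smul_mul_assoc, mul_smul_comm, smul_smul, ← Finset.sum_smul]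
  congr 1
  rw [← ofReal_mul, Real.mul_self_sqrt hx]
  push_cast
  simp only [sq, mul_comm]

/-- If a completely positive map `η(b) = (1/m) ∑ⱼ aⱼ b aⱼ` on `Mₙ(ℂ)` (with the `aⱼ`
self-adjoint) satisfies the identity `η(b)·b·η(b) = η(b·η(b)·b)` for all `b`, then
`η(b) = a b a` for a single self-adjoint `a`. -/
theorem variance_identity_forces_single_a {n m : ℕ} (hm : 0 < m)
    (a : Fin m → Matrix (Fin n) (Fin n) ℂ) (ha : ∀ j, IsSelfAdjoint (a j))
    (hid : ∀ b : Matrix (Fin n) (Fin n) ℂ,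
      ((m : ℂ)⁻¹ • ∑ j, a j * b * a j) * b * ((m : ℂ)⁻¹ • ∑ j, a j * b * a j) =
        (m : ℂ)⁻¹ • ∑ j, a j * (b * ((m : ℂ)⁻¹ • ∑ i, a i * b * a i) * b) * a j) :
    ∃ c : Matrix (Fin n) (Fin n) ℂ, IsSelfAdjoint c ∧
      ∀ b : Matrix (Fin n) (Fin n) ℂ,
        (m : ℂ)⁻¹ • ∑ j, a j * b * a j = c * b * c := by
  have hS := sandwichSum_identity_of_smul (K := ℂ) (inv_ne_zero (Nat.cast_ne_zero.2 hm.ne')) hid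
  obtain ⟨a₀, ha₀, s, rfl⟩ :=
    exists_eq_smul_of_smul_mulVec_comm ha (smul_mulVec_comm_of_sandwichSum_identity ha hS)
  obtain ⟨c, hc, hcb⟩ :=
    exists_isSelfAdjoint_smul_sandwichSum_eq (𝕜 := ℂ) ha₀ (inv_nonneg.2 (Nat.cast_nonneg' m)) s
  refine ⟨c, hc, fun b => ?_⟩
  rw [← hcb b]
  push_cast
  rfl
end
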